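/- arXiv:nlin/0104036 — 4 statements merged into one kernel-verified Lean document; each statement's English description precedes it below -/
import Mathlib

section
/- Let X, Y : ℝ² → ℝ³ and H, K : ℝ² → ℝⁿ (row vectors) be smooth maps satisfying X_y = qY, Y_x = pX, H_y = pK, K_x = qH for smooth scalar functions p, q. Then the matrix-valued 1-form with R_x = X H and R_y = Y K is closed, i.e. (XH)_y = (YK)_x, so a potential matrix R : ℝ² → ℝ^{3×n} exists locally. -/
open Matrix

theorem HasDerivAt.outer_mul {𝕜 𝔸 ι κ : Type*} [NontriviallyNormedField 𝕜] [NormedRing 𝔸]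
    [NormedAlgebra 𝕜 𝔸] [Fintype ι] [Fintype κ] {f : 𝕜 → ι → 𝔸} {g : 𝕜 → κ → 𝔸}
    {f' : ι → 𝔸} {g' : κ → 𝔸} {x : 𝕜} (hf : HasDerivAt f f' x) (hg : HasDerivAt g g' x) :
    HasDerivAt (fun t i j => f t i * g t j) (fun i j => f' i * g x j + f x i * g' j) x :=
  hasDerivAt_pi.mpr fun i => hasDerivAt_pi.mpr fun j =>
    (hasDerivAt_pi.mp hf i).mul (hasDerivAt_pi.mp hg j)

/-- If `X_y = q • Y`, `Y_x = p • X`, `H_y = p • K`, `K_x = q • H`,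
then the matrix-valued 1-form `(X H, Y K)` (outer products) is closed:
the `y`-derivative of `X H` and the `x`-derivative of `Y K` coincide. -/
theorem combescure_form_closed (n : ℕ)
    (X Y : ℝ → ℝ → Fin 3 → ℝ) (H K : ℝ → ℝ → Fin n → ℝ) (p q : ℝ → ℝ → ℝ)
    (hXy : ∀ x y, HasDerivAt (fun t => X x t) (q x y • Y x y) y)
    (hYx : ∀ x y, HasDerivAt (fun s => Y s y) (p x y • X x y) x)
    (hHy : ∀ x y, HasDerivAt (fun t => H x t) (p x y • K x y) y)
    (hKx : ∀ x y, HasDerivAt (fun s => K s y) (q x y • H x y) x) :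
    ∀ x y, ∃ D : Fin 3 → Fin n → ℝ,
      HasDerivAt (fun t => (fun i j => X x t i * H x t j)) D y ∧
      HasDerivAt (fun s => (fun i j => Y s y i * K s y j)) D x := by
  intro x y
  -- both derivatives equal `q Y H + p X K`
  refine ⟨_, (hXy x y).outer_mul (hHy x y), ((hYx x y).outer_mul (hKx x y)).congr_deriv ?_⟩
  funext i j
  simp only [Pi.smul_apply, smul_eq_mul]
  ring
end

section
/- Let X, Y : ℝ² → ℝ³ satisfy X_y = pY, Y_x = pX (the Petot constraint p = q) and define the matrix R by R_x = XXᵀ, R_y = YYᵀ (compatible). Then for each κ, the metric coefficients satisfy the conservation law (|R_{κ,x}|²)_y = (|R_{κ,y}|²)_x, where R_κ denotes the κ-th column viewed as position vector, i.e. (|XXᵀe_κ|²)_y = (|YYᵀe_κ|²)_x. -/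
open Matrix

/-! Since `X` and `Y` are unit vectors, the two densities reduce to `X_κ²` and `Y_κ²`, whose
derivatives `2 X_κ (X_κ)_y = 2p X_κ Y_κ` and `2 Y_κ (Y_κ)_x = 2p Y_κ X_κ` agree by the Petot
equations. -/

theorem HasDerivAt.sq_apply_mul_dotProduct_self_of_unit {ι : Type*} [Fintype ι]
    {f : ℝ → ι → ℝ} {f' : ι → ℝ} {t : ℝ} (hf : HasDerivAt f f' t)
    (hunit : ∀ s, f s ⬝ᵥ f s = 1) (i : ι) :
    HasDerivAt (fun s => f s i ^ 2 * (f s ⬝ᵥ f s)) (2 * f t i * f' i) t := by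
  simp only [hunit, mul_one]
  simpa using (hasDerivAt_pi.mp hf i).fun_pow 2

theorem petot_conservation_law_general (X Y : ℝ → ℝ → Fin 3 → ℝ) (p : ℝ → ℝ → ℝ)
    (hXy : ∀ x y, HasDerivAt (fun t => X x t) (p x y • Y x y) y)
    (hYx : ∀ x y, HasDerivAt (fun s => Y s y) (p x y • X x y) x)
    (hX : ∀ x y, X x y ⬝ᵥ X x y = 1)
    (hY : ∀ x y, Y x y ⬝ᵥ Y x y = 1) :
    ∀ (κ : Fin 3) (x y : ℝ), ∃ d : ℝ,
      HasDerivAt (fun t => (X x t κ) ^ 2 * (X x t ⬝ᵥ X x t)) d y ∧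
      HasDerivAt (fun s => (Y s y κ) ^ 2 * (Y s y ⬝ᵥ Y s y)) d x := by
  intro κ x y
  refine ⟨2 * p x y * X x y κ * Y x y κ, ?_, ?_⟩
  · convert (hXy x y).sq_apply_mul_dotProduct_self_of_unit (hX x) κ using 1
    simp only [Pi.smul_apply, smul_eq_mul]
    ring
  · convert (hYx x y).sq_apply_mul_dotProduct_self_of_unit (fun s => hY s y) κ using 1
    simp only [Pi.smul_apply, smul_eq_mul]
    ring

/-- Petot conservation laws: In the Petot setting `X_y = pY`,
`Y_x = pX` with `X, Y` orthonormal, for each `κ` the quantity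
`|R_{κ,x}|² = X_κ²|X|²` and `|R_{κ,y}|² = Y_κ²|Y|²` satisfy the conservation law
`(X_κ²|X|²)_y = (Y_κ²|Y|²)_x`. -/
theorem petot_conservation_law (X Y : ℝ → ℝ → Fin 3 → ℝ) (p : ℝ → ℝ → ℝ)
    (hXy : ∀ x y, HasDerivAt (fun t => X x t) (p x y • Y x y) y)
    (hYx : ∀ x y, HasDerivAt (fun s => Y s y) (p x y • X x y) x)
    (hX : ∀ x y, X x y ⬝ᵥ X x y = 1)
    (hY : ∀ x y, Y x y ⬝ᵥ Y x y = 1)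
    (hXY : ∀ x y, X x y ⬝ᵥ Y x y = 0) :
    ∀ (κ : Fin 3) (x y : ℝ), ∃ d : ℝ,
      HasDerivAt (fun t => (X x t κ) ^ 2 * (X x t ⬝ᵥ X x t)) d y ∧
      HasDerivAt (fun s => (Y s y κ) ^ 2 * (Y s y ⬝ᵥ Y s y)) d x :=
  petot_conservation_law_general X Y p hXy hYx hX hY
end

section
/- (Fundamental transformation) Let X,Y : ℝ²→ℝ³, H,K : ℝ²→ℝⁿ satisfy X_y = qY, Y_x = pX, H_y = pK, K_x = qH; let scalar eigenfunctions X̃, Ỹ satisfy X̃_y = qỸ, Ỹ_x = pX̃ and adjoint eigenfunctions H̃, K̃ satisfy H̃_y = pK̃, K̃_x = qH̃; let M⃗ ∈ ℝ³, M̲ ∈ ℝⁿ, M ∈ ℝ be potentials with M⃗_x = X H̃, M⃗_y = Y K̃, M̲_x = X̃ H, M̲_y = Ỹ K, M_x = X̃ H̃, M_y = Ỹ K̃, with M nonvanishing. Then the primed quantities X' = X - X̃ M⃗ / M, Y' = Y - Ỹ M⃗ / M, H' = H - H̃ M̲ / M, K' = K - K̃ M̲ / M, p' = p - Ỹ H̃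 / M, q' = q - X̃ K̃ / M again satisfy X'_y = q'Y', Y'_x = p'X', H'_y = p'K', K'_x = q'H'. -/
/-!
Each of the four equations involves a derivative in one direction only, and all four are
instances of a single one-variable identity: if `A' = c W`, `a' = c y`, `m' = y b` and
`B' = b W`, then the product and quotient rules give
`(A - (a/m) B)' = (c - a b/m) (W - (y/m) B)`.
-/

section Potential

variable {E : Type*} [NormedAddCommGroup E] [NormedSpace ℝ E]
  {A B : ℝ → E} {a m : ℝ → ℝ} {t c y b : ℝ} {W : E}

theorem hasDerivAt_sub_div_smul_potential (hA : HasDerivAt A (c • W) t)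
    (ha : HasDerivAt a (c * y) t) (hm : HasDerivAt m (y * b) t) (hB : HasDerivAt B (b • W) t)
    (hm0 : m t ≠ 0) :
    HasDerivAt (fun s => A s - (a s / m s) • B s)
      ((c - a t * b / m t) • (W - (y / m t) • B t)) t := by
  convert hA.sub ((ha.div hm hm0).smul hB) using 1
  · rfl
  simp only [Pi.div_apply]
  match_scalars <;> field_simp

theorem hasDerivAt_sub_div_smul_potential' (hA : HasDerivAt A (c • W) t)
    (ha : HasDerivAt a (c * y) t) (hm : HasDerivAt m (b * y) t) (hB : HasDerivAt B (b • W) t)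
    (hm0 : m t ≠ 0) :
    HasDerivAt (fun s => A s - (a s / m s) • B s)
      ((c - b * a t / m t) • (W - (y / m t) • B t)) t := by
  rw [mul_comm b]
  exact hasDerivAt_sub_div_smul_potential hA ha (mul_comm b y ▸ hm) hB hm0

end Potential

/-- Fundamental transformation: Given solutions `X, Y, H, K` of
the linear systems, eigenfunctions `Xt, Yt`, adjoint eigenfunctions `Ht, Kt`,
and bilinear potentials `Mv, Mu, M` with `M ≠ 0`, the primed quantities
`X' = X - (Xt/M) Mv`, `Y' = Y - (Yt/M) Mv`, `H' = H - (Ht/M) Mu`,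
`K' = K - (Kt/M) Mu`, `p' = p - Yt Ht/M`, `q' = q - Xt Kt/M`
again satisfy `X'_y = q' Y'`, `Y'_x = p' X'`, `H'_y = p' K'`, `K'_x = q' H'`. -/
theorem fundamental_transformation (n : ℕ)
    (X Y : ℝ → ℝ → Fin 3 → ℝ) (H K : ℝ → ℝ → Fin n → ℝ)
    (Xt Yt Ht Kt M p q : ℝ → ℝ → ℝ)
    (Mv : ℝ → ℝ → Fin 3 → ℝ) (Mu : ℝ → ℝ → Fin n → ℝ)
    (hXy : ∀ x y, HasDerivAt (fun t => X x t) (q x y • Y x y) y)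
    (hYx : ∀ x y, HasDerivAt (fun s => Y s y) (p x y • X x y) x)
    (hHy : ∀ x y, HasDerivAt (fun t => H x t) (p x y • K x y) y)
    (hKx : ∀ x y, HasDerivAt (fun s => K s y) (q x y • H x y) x)
    (hXty : ∀ x y, HasDerivAt (fun t => Xt x t) (q x y * Yt x y) y)
    (hYtx : ∀ x y, HasDerivAt (fun s => Yt s y) (p x y * Xt x y) x)
    (hHty : ∀ x y, HasDerivAt (fun t => Ht x t) (p x y * Kt x y) y)
    (hKtx : ∀ x y, HasDerivAt (fun s => Kt s y) (q x y * Ht x y) x)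
    (hMvx : ∀ x y, HasDerivAt (fun s => Mv s y) (Ht x y • X x y) x)
    (hMvy : ∀ x y, HasDerivAt (fun t => Mv x t) (Kt x y • Y x y) y)
    (hMux : ∀ x y, HasDerivAt (fun s => Mu s y) (Xt x y • H x y) x)
    (hMuy : ∀ x y, HasDerivAt (fun t => Mu x t) (Yt x y • K x y) y)
    (hMx : ∀ x y, HasDerivAt (fun s => M s y) (Xt x y * Ht x y) x)
    (hMy : ∀ x y, HasDerivAt (fun t => M x t) (Yt x y * Kt x y) y)
    (hM0 : ∀ x y, M x y ≠ 0) :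
    ∀ x y,
      HasDerivAt (fun t => X x t - (Xt x t / M x t) • Mv x t)
        ((q x y - Xt x y * Kt x y / M x y) •
          (Y x y - (Yt x y / M x y) • Mv x y)) y ∧
      HasDerivAt (fun s => Y s y - (Yt s y / M s y) • Mv s y)
        ((p x y - Yt x y * Ht x y / M x y) •
          (X x y - (Xt x y / M x y) • Mv x y)) x ∧
      HasDerivAt (fun t => H x t - (Ht x t / M x t) • Mu x t)
        ((p x y - Yt x y * Ht x y / M x y) •
          (K x y - (Kt x y / M x y) • Mu x y)) y ∧
      HasDerivAt (fun s => K s y - (Kt s y / M s y) • Mu s y)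
        ((q x y - Xt x y * Kt x y / M x y) •
          (H x y - (Ht x y / M x y) • Mu x y)) x := fun x y =>
  ⟨hasDerivAt_sub_div_smul_potential (hXy x y) (hXty x y) (hMy x y) (hMvy x y) (hM0 x y),
    hasDerivAt_sub_div_smul_potential (hYx x y) (hYtx x y) (hMx x y) (hMvx x y) (hM0 x y),
    hasDerivAt_sub_div_smul_potential' (hHy x y) (hHty x y) (hMy x y) (hMuy x y) (hM0 x y),
    hasDerivAt_sub_div_smul_potential' (hKx x y) (hKtx x y) (hMx x y) (hMux x y) (hM0 x y)⟩
end

section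
/- (Ribaucour constraint) In the setting of the Fundamental transformation with X·Y = 0, the choices X̃ = M⃗·X and Ỹ = M⃗·Y are eigenfunctions: (M⃗·X)_y = q (M⃗·Y) and (M⃗·Y)_x = p (M⃗·X). Moreover with these choices, (|M⃗|²)_x = 2M_x and (|M⃗|²)_y = 2M_y, so |M⃗|² - 2M is constant. -/
open Matrix

/-! Differentiating `M⃗·X` in `y` gives `K̃ (Y·X) + q (M⃗·Y)`, and the first term vanishes because
`X ⊥ Y`; symmetrically for `M⃗·Y` in `x`. Since `M⃗_x = H̃ X`, the derivative of `|M⃗|²` in `x` is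
`2 (M⃗·X) H̃ = 2 M_x`, and likewise in `y`, so `|M⃗|² - 2M` has vanishing partial derivatives. -/

section DotProductDeriv

variable {𝕜 ι : Type*} [NontriviallyNormedField 𝕜] [Fintype ι]
  {f g m a : 𝕜 → ι → 𝕜} {f' g' u : ι → 𝕜} {k c : 𝕜} {t : 𝕜}

theorem HasDerivAt.dotProduct (hf : HasDerivAt f f' t) (hg : HasDerivAt g g' t) :
    HasDerivAt (fun s => f s ⬝ᵥ g s) (f' ⬝ᵥ g t + f t ⬝ᵥ g') t := by
  simp only [_root_.dotProduct, ← Finset.sum_add_distrib]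
  exact HasDerivAt.fun_sum fun i _ => (hasDerivAt_pi.1 hf i).fun_mul (hasDerivAt_pi.1 hg i)

theorem HasDerivAt.dotProduct_self (hm : HasDerivAt m (k • u) t) :
    HasDerivAt (fun s => m s ⬝ᵥ m s) (2 * ((m t ⬝ᵥ u) * k)) t := by
  convert hm.dotProduct hm using 1
  simp only [smul_dotProduct, dotProduct_smul, dotProduct_comm u, smul_eq_mul]
  ring

theorem HasDerivAt.dotProduct_of_orthogonal (hm : HasDerivAt m (k • u) t)
    (ha : HasDerivAt a (c • u) t) (hau : a t ⬝ᵥ u = 0) :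
    HasDerivAt (fun s => m s ⬝ᵥ a s) (c * (m t ⬝ᵥ u)) t := by
  convert hm.dotProduct ha using 1
  simp only [smul_dotProduct, dotProduct_smul, dotProduct_comm u, hau, smul_eq_mul]
  ring

end DotProductDeriv

theorem ribaucour_constraint_general (X Y Mv : ℝ → ℝ → Fin 3 → ℝ)
    (Ht Kt M p q : ℝ → ℝ → ℝ)
    (hXy : ∀ x y, HasDerivAt (fun t => X x t) (q x y • Y x y) y)
    (hYx : ∀ x y, HasDerivAt (fun s => Y s y) (p x y • X x y) x)
    (hXY : ∀ x y, X x y ⬝ᵥ Y x y = 0)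
    (hMvx : ∀ x y, HasDerivAt (fun s => Mv s y) (Ht x y • X x y) x)
    (hMvy : ∀ x y, HasDerivAt (fun t => Mv x t) (Kt x y • Y x y) y)
    (hMx : ∀ x y, HasDerivAt (fun s => M s y) ((Mv x y ⬝ᵥ X x y) * Ht x y) x)
    (hMy : ∀ x y, HasDerivAt (fun t => M x t) ((Mv x y ⬝ᵥ Y x y) * Kt x y) y) :
    ∀ x y,
      HasDerivAt (fun t => Mv x t ⬝ᵥ X x t) (q x y * (Mv x y ⬝ᵥ Y x y)) y ∧
      HasDerivAt (fun s => Mv s y ⬝ᵥ Y s y) (p x y * (Mv x y ⬝ᵥ X x y)) x ∧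
      HasDerivAt (fun s => Mv s y ⬝ᵥ Mv s y)
        (2 * ((Mv x y ⬝ᵥ X x y) * Ht x y)) x ∧
      HasDerivAt (fun t => Mv x t ⬝ᵥ Mv x t)
        (2 * ((Mv x y ⬝ᵥ Y x y) * Kt x y)) y ∧
      HasDerivAt (fun s => Mv s y ⬝ᵥ Mv s y - 2 * M s y) 0 x ∧
      HasDerivAt (fun t => Mv x t ⬝ᵥ Mv x t - 2 * M x t) 0 y := by
  intro x y
  have hNormX := (hMvx x y).dotProduct_self
  have hNormY := (hMvy x y).dotProduct_self
  refine ⟨(hMvy x y).dotProduct_of_orthogonal (hXy x y) (hXY x y),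
    (hMvx x y).dotProduct_of_orthogonal (hYx x y) (by rw [dotProduct_comm, hXY]),
    hNormX, hNormY, ?_, ?_⟩
  · simpa using hNormX.fun_sub ((hMx x y).const_mul 2)
  · simpa using hNormY.fun_sub ((hMy x y).const_mul 2)

/-- Ribaucour constraint: With `X·Y = 0`, the choices
`Xt = Mv·X`, `Yt = Mv·Y` are eigenfunctions, and with these choices
`(|Mv|²)_x = 2M_x`, `(|Mv|²)_y = 2M_y`, so `|Mv|² - 2M` is constant. -/
theorem ribaucour_constraint (X Y Mv : ℝ → ℝ → Fin 3 → ℝ)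
    (Ht Kt M p q : ℝ → ℝ → ℝ)
    (hXy : ∀ x y, HasDerivAt (fun t => X x t) (q x y • Y x y) y)
    (hYx : ∀ x y, HasDerivAt (fun s => Y s y) (p x y • X x y) x)
    (hXY : ∀ x y, X x y ⬝ᵥ Y x y = 0)
    (hHty : ∀ x y, HasDerivAt (fun t => Ht x t) (p x y * Kt x y) y)
    (hKtx : ∀ x y, HasDerivAt (fun s => Kt s y) (q x y * Ht x y) x)
    (hMvx : ∀ x y, HasDerivAt (fun s => Mv s y) (Ht x y • X x y) x)
    (hMvy : ∀ x y, HasDerivAt (fun t => Mv x t) (Kt x y • Y x y) y)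
    (hMx : ∀ x y, HasDerivAt (fun s => M s y) ((Mv x y ⬝ᵥ X x y) * Ht x y) x)
    (hMy : ∀ x y, HasDerivAt (fun t => M x t) ((Mv x y ⬝ᵥ Y x y) * Kt x y) y) :
    ∀ x y,
      HasDerivAt (fun t => Mv x t ⬝ᵥ X x t) (q x y * (Mv x y ⬝ᵥ Y x y)) y ∧
      HasDerivAt (fun s => Mv s y ⬝ᵥ Y s y) (p x y * (Mv x y ⬝ᵥ X x y)) x ∧
      HasDerivAt (fun s => Mv s y ⬝ᵥ Mv s y)
        (2 * ((Mv x y ⬝ᵥ X x y) * Ht x y)) x ∧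
      HasDerivAt (fun t => Mv x t ⬝ᵥ Mv x t)
        (2 * ((Mv x y ⬝ᵥ Y x y) * Kt x y)) y ∧
      HasDerivAt (fun s => Mv s y ⬝ᵥ Mv s y - 2 * M s y) 0 x ∧
      HasDerivAt (fun t => Mv x t ⬝ᵥ Mv x t - 2 * M x t) 0 y :=
  ribaucour_constraint_general X Y Mv Ht Kt M p q hXy hYx hXY hMvx hMvy hMx hMy
end
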